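/- arXiv:2403.12882 — 2 statements merged into one kernel-verified Lean document; each statement's English description precedes it below -/
import Mathlib

section
/- The q-exponentials satisfy exp_q(x) · exp_{q^{-1}}(-x) = 1 as formal power series, where exp_q(x) = Σ_{n≥0} x^n/(n)_q! with (n)_q = (1 - q^n)/(1 - q) and (n)_q! = (1)_q (2)_q ⋯ (n)_q, (0)_q! = 1. -/
/-!
Write `E = exp_q(x)` and `F = exp_{q⁻¹}(-x)`, and let `f(qx)` denote `rescale q f`.
Comparing coefficients, `E(qx) = (1 - (1 - q)x) E(x)` and `F(x) = (1 - (1 - q)x) F(qx)`,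
the latter because `(n)_{q⁻¹}! = q^{-(n choose 2)} (n)_q!`. Hence `G = E F` satisfies
`G(qx) = G(x)`, i.e. `qⁿ gₙ = gₙ` for all `n`; as `q` is not a root of unity, `G` is its
constant term `1`.
-/

/-- `(k)_q = (1 - q^k)/(1 - q)`. -/
noncomputable def qNum (q : RatFunc ℚ) (k : ℕ) : RatFunc ℚ := (1 - q ^ k) / (1 - q)

/-- `(n)_q! = (1)_q (2)_q ⋯ (n)_q`, with `(0)_q! = 1`. -/
noncomputable def qNumFact (q : RatFunc ℚ) (n : ℕ) : RatFunc ℚ :=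
  ∏ k ∈ Finset.range n, qNum q (k + 1)

/-- The q-exponential `exp_q(x) = Σ_{n ≥ 0} x^n / (n)_q!` as a formal power series. -/
noncomputable def qExp (q : RatFunc ℚ) : PowerSeries (RatFunc ℚ) :=
  PowerSeries.mk fun n => (qNumFact q n)⁻¹

/-- `exp_{q⁻¹}(-x) = Σ_{n ≥ 0} (-1)^n x^n / (n)_{q⁻¹}!`. -/
noncomputable def qExpInvNeg (q : RatFunc ℚ) : PowerSeries (RatFunc ℚ) :=
  PowerSeries.mk fun n => (-1) ^ n * (qNumFact q⁻¹ n)⁻¹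

open PowerSeries

lemma pow_succ_ne_one_of_not_isOfFinOrder {M : Type*} [Monoid M] {x : M} (hx : ¬IsOfFinOrder x)
    (n : ℕ) : x ^ (n + 1) ≠ 1 :=
  fun h => hx (isOfFinOrder_iff_pow_eq_one.2 ⟨n + 1, n.succ_pos, h⟩)

lemma qNumFact_zero (q : RatFunc ℚ) : qNumFact q 0 = 1 := Finset.prod_range_zero _

lemma qNumFact_succ (q : RatFunc ℚ) (n : ℕ) :
    qNumFact q (n + 1) = qNumFact q n * qNum q (n + 1) :=
  Finset.prod_range_succ _ _

lemma one_sub_pow_mul_inv_qNumFact_succ {q : RatFunc ℚ} {n : ℕ} (hq : q ^ (n + 1) ≠ 1) :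
    (1 - q ^ (n + 1)) * (qNumFact q (n + 1))⁻¹ = (1 - q) * (qNumFact q n)⁻¹ := by
  have h : 1 - q ^ (n + 1) ≠ 0 := sub_ne_zero.2 hq.symm
  rw [qNumFact_succ, qNum, mul_inv, inv_div]
  field_simp

lemma qNum_inv_mul_pow {q : RatFunc ℚ} (hq : q ≠ 0) (k : ℕ) :
    qNum q⁻¹ (k + 1) * q ^ k = qNum q (k + 1) := by
  rcases eq_or_ne q 1 with rfl | hq1
  · simp [qNum]
  have h1 : 1 - q ≠ 0 := sub_ne_zero.2 hq1.symm
  have h2 : q - 1 ≠ 0 := sub_ne_zero.2 hq1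
  rw [qNum, qNum, inv_pow]
  field_simp
  ring

lemma qNumFact_inv_mul_pow {q : RatFunc ℚ} (hq : q ≠ 0) (n : ℕ) :
    qNumFact q⁻¹ n * q ^ n.choose 2 = qNumFact q n := by
  induction n with
  | zero => simp [qNumFact_zero]
  | succ n ih =>
    rw [qNumFact_succ, qNumFact_succ, ← ih, ← qNum_inv_mul_pow hq, Nat.choose_succ_succ',
      Nat.choose_one_right, pow_add]
    ring

lemma coeff_qExpInvNeg {q : RatFunc ℚ} (hq : q ≠ 0) (n : ℕ) :
    coeff n (qExpInvNeg q) = (-1) ^ n * q ^ n.choose 2 * (qNumFact q n)⁻¹ := by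
  rw [qExpInvNeg, coeff_mk, ← qNumFact_inv_mul_pow hq, mul_inv]
  field_simp

lemma coeff_zero_one_sub_C_mul_X_mul {R : Type*} [CommRing R] (c : R) (f : R⟦X⟧) :
    coeff 0 ((1 - C c * X) * f) = coeff 0 f := by
  simp [sub_mul, mul_assoc]

lemma coeff_succ_one_sub_C_mul_X_mul {R : Type*} [CommRing R] (c : R) (f : R⟦X⟧) (n : ℕ) :
    coeff (n + 1) ((1 - C c * X) * f) = coeff (n + 1) f - c * coeff n f := by
  rw [sub_mul, one_mul, mul_assoc, map_sub, coeff_C_mul, coeff_succ_X_mul]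

lemma rescale_qExp {q : RatFunc ℚ} (hq : ¬IsOfFinOrder q) :
    rescale q (qExp q) = (1 - C (1 - q) * X) * qExp q := by
  ext (_ | n)
  · simp [qExp, qNumFact_zero]
  · rw [coeff_succ_one_sub_C_mul_X_mul, coeff_rescale]
    simp only [qExp, coeff_mk]
    linear_combination
      -one_sub_pow_mul_inv_qNumFact_succ (pow_succ_ne_one_of_not_isOfFinOrder hq n)

lemma qExpInvNeg_eq_mul_rescale {q : RatFunc ℚ} (hq0 : q ≠ 0) (hq : ¬IsOfFinOrder q) :
    qExpInvNeg q = (1 - C (1 - q) * X) * rescale q (qExpInvNeg q) := by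
  ext (_ | n)
  · rw [coeff_zero_one_sub_C_mul_X_mul, coeff_rescale]
    simp [qExpInvNeg, qNumFact_zero]
  · have hchoose : (n + 1).choose 2 = n.choose 2 + n := by
      rw [Nat.choose_succ_succ', Nat.choose_one_right, add_comm]
    rw [coeff_succ_one_sub_C_mul_X_mul, coeff_rescale, coeff_rescale, coeff_qExpInvNeg hq0,
      coeff_qExpInvNeg hq0, hchoose]
    linear_combination -(-1) ^ n * q ^ n.choose 2 * q ^ n *
      one_sub_pow_mul_inv_qNumFact_succ (pow_succ_ne_one_of_not_isOfFinOrder hq n)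

lemma PowerSeries.eq_C_constantCoeff_of_rescale_eq {R : Type*} [CommRing R] [IsDomain R] {a : R}
    (ha : ¬IsOfFinOrder a) {f : R⟦X⟧} (hf : rescale a f = f) : f = C (constantCoeff f) := by
  ext (_ | n)
  · simp
  · have h := congrArg (coeff (n + 1)) hf
    rw [coeff_rescale] at h
    rw [coeff_C, if_neg n.succ_ne_zero]
    by_contra hc
    exact pow_succ_ne_one_of_not_isOfFinOrder ha n ((mul_eq_right₀ hc).1 h)

lemma RatFunc.not_isOfFinOrder_X {K : Type*} [CommRing K] [IsDomain K] :
    ¬IsOfFinOrder (RatFunc.X : RatFunc K) := by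
  rw [isOfFinOrder_iff_pow_eq_one]
  rintro ⟨n, hn, h⟩
  exact RatFunc.transcendental_X ⟨(Polynomial.X ^ n - Polynomial.C 1 : Polynomial K),
    Polynomial.X_pow_sub_C_ne_zero hn 1, by simp [h]⟩

lemma rescale_qExp_mul_qExpInvNeg {q : RatFunc ℚ} (hq0 : q ≠ 0) (hq : ¬IsOfFinOrder q) :
    rescale q (qExp q * qExpInvNeg q) = qExp q * qExpInvNeg q := by
  conv_rhs => rw [qExpInvNeg_eq_mul_rescale hq0 hq]
  rw [map_mul, rescale_qExp hq]
  ring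

lemma qExp_mul_qExpInvNeg {q : RatFunc ℚ} (hq0 : q ≠ 0) (hq : ¬IsOfFinOrder q) :
    qExp q * qExpInvNeg q = 1 := by
  rw [eq_C_constantCoeff_of_rescale_eq hq (rescale_qExp_mul_qExpInvNeg hq0 hq)]
  simp [qExp, qExpInvNeg, qNumFact_zero]

/-- The q-exponentials satisfy `exp_q(x) · exp_{q⁻¹}(-x) = 1` as formal power series. -/
theorem stmt3 : qExp RatFunc.X * qExpInvNeg RatFunc.X = 1 :=
  qExp_mul_qExpInvNeg RatFunc.X_ne_zero RatFunc.not_isOfFinOrder_X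
end

section
/- The quantum dimension of the typical module vanishes: with the pivotal structure given by f ⊗ x ↦ f(q^{−2h2} x), the quantum dimension of V(a1,a2) is qdim = Σ over the basis of (±1)·q^{−2·(h2-weight)} and equals (Σ_{k=0}^{a1} q^{−2(a2+k)}) − (Σ_{k=0}^{a1−1} q^{−2(a2+k+1)}) − (Σ_{k=0}^{a1+1} q^{−2(a2+k)}) + (Σ_{k=0}^{a1} q^{−2(a2+k+1)}) = 0. -/
noncomputable section

/-- Work in `ℚ(q, t)` where `t = q^{−2a2}` is a formal variable. -/
def Fqt18 : Type := RatFunc (RatFunc ℚ)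

instance : Field Fqt18 := inferInstanceAs (Field (RatFunc (RatFunc ℚ)))

def qv18 : Fqt18 := RatFunc.C RatFunc.X

def tv18 : Fqt18 := RatFunc.X

lemma shift18 (x : Fqt18) (n : ℕ) :
    (∑ k ∈ Finset.range (n + 1), x ^ (2 * k)) = 1 + x ^ 2 * ∑ k ∈ Finset.range n, x ^ (2 * k) := by
  rw [Finset.sum_range_succ' (fun k => x ^ (2 * k)) n, Finset.mul_sum, add_comm]
  simp only [mul_zero, pow_zero]
  congr 1
  exact Finset.sum_congr rfl fun k _ => by ring

/-- The quantum dimension of the typical module `V(a1,a2)` vanishes: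
`t·[(Σ_{k=0}^{a1} q^{−2k}) − q^{−2}(Σ_{k=0}^{a1−1} q^{−2k}) − (Σ_{k=0}^{a1+1} q^{−2k})
  + q^{−2}(Σ_{k=0}^{a1} q^{−2k})] = 0`, where `t = q^{−2a2}`. -/
theorem stmt18 (a1 : ℕ) :
    tv18 * ((∑ k ∈ Finset.range (a1 + 1), qv18⁻¹ ^ (2 * k)) -
        qv18⁻¹ ^ 2 * (∑ k ∈ Finset.range a1, qv18⁻¹ ^ (2 * k)) -
        (∑ k ∈ Finset.range (a1 + 2), qv18⁻¹ ^ (2 * k)) +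
        qv18⁻¹ ^ 2 * (∑ k ∈ Finset.range (a1 + 1), qv18⁻¹ ^ (2 * k))) = 0 := by
  rw [shift18 qv18⁻¹ (a1 + 1), shift18 qv18⁻¹ a1]
  ring

end
end
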